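/- arXiv:2306.15234 — 2 statements merged into one kernel-verified Lean document; each statement's English description precedes it below -/
import Mathlib

section
/- Let n ≥ 1 and let m be a positive integer. Then there exists a constant C_m > 0 such that for every φ ∈ L¹_m(ℝⁿ) and t > 0, the estimate Σ_{|α|=m} ‖x^α e^{tΔ}φ − e^{tΔ}(x^α φ)‖₁ ≤ C_m { t^{1/2} ‖ |x|^{m−1} φ ‖₁ + (t^{1/2} + t^{m/2}) ‖φ‖₁ } holds. -/
open MeasureTheory Real Filter
open scoped ENNReal

noncomputable section

/-- `ℝⁿ` as a Euclidean space. -/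
abbrev Rn (n : ℕ) : Type := EuclideanSpace ℝ (Fin n)

/-- The Gauss kernel `G_t(x) = (4πt)^{-n/2} exp(-|x|²/(4t))`. -/
noncomputable def heatKernel (n : ℕ) (t : ℝ) (x : Rn n) : ℝ :=
  (4 * π * t) ^ (-(n : ℝ) / 2) * Real.exp (-‖x‖ ^ 2 / (4 * t))

/-- The heat semigroup `e^{tΔ}φ = G_t ∗ φ` for `t > 0`, and `e^{0Δ}φ = φ`. -/
noncomputable def heatSG (n : ℕ) (t : ℝ) (φ : Rn n → ℝ) : Rn n → ℝ :=
  if t = 0 then φ else fun x => ∫ y : Rn n, heatKernel n t (x - y) * φ y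

/-- The Gauss kernel at time `1`. -/
noncomputable def gaussOne (n : ℕ) : Rn n → ℝ := heatKernel n 1

/-- The dilation `(δ_t ψ)(x) = t^{-n/2} ψ(t^{-1/2} x)`. -/
noncomputable def dil (n : ℕ) (t : ℝ) (ψ : Rn n → ℝ) : Rn n → ℝ :=
  fun x => t ^ (-(n : ℝ) / 2) * ψ ((t ^ (-(1 : ℝ) / 2) : ℝ) • x)

/-- The monomial `x^α = ∏ x_j^{α_j}` for a multi-index `α`. -/
noncomputable def mono (n : ℕ) (α : Fin n → ℕ) (x : Rn n) : ℝ := ∏ j, x j ^ α j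

/-- Membership in the weighted space `L¹_m(ℝⁿ)`:
`x^α φ ∈ L¹` for every multi-index `α` with `|α| ≤ m`. -/
def MemL1m (n m : ℕ) (φ : Rn n → ℝ) : Prop :=
  ∀ α : Fin n → ℕ, (∑ j, α j) ≤ m →
    MemLp (fun x => mono n α x * φ x) 1 (volume : Measure (Rn n))

/-- The partial derivative `∂_j`. -/
noncomputable def pd (n : ℕ) (j : Fin n) (f : Rn n → ℝ) : Rn n → ℝ :=
  fun x => fderiv ℝ f x (EuclideanSpace.single j 1)

/-- The partial derivative `∂^α` of multi-order `α`. -/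
noncomputable def pdMulti (n : ℕ) (α : Fin n → ℕ) (f : Rn n → ℝ) : Rn n → ℝ :=
  (List.finRange n).foldr (fun j g => (pd n j)^[α j] g) f

/-- The rescaled Hermite polynomial
`h_α(x) = Σ_{2β ≤ α} ((−1)^{|β|} α!/(β!(α−2β)!)) x^{α−2β}`. -/
noncomputable def hPoly (n : ℕ) (α : Fin n → ℕ) (x : Rn n) : ℝ :=
  ∑ β ∈ (Finset.Iic α).filter (fun β => ∀ j, 2 * β j ≤ α j),
    (-1 : ℝ) ^ (∑ j, β j) * (∏ j, ((α j).factorial : ℝ)) /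
        ((∏ j, ((β j).factorial : ℝ)) * (∏ j, ((α j - 2 * β j).factorial : ℝ))) *
      ∏ j, x j ^ (α j - 2 * β j)

/-- The decay exponent `(n/2)(1 - 1/q)`. -/
noncomputable def expo (n : ℕ) (q : ℝ≥0∞) : ℝ := (n : ℝ) / 2 * (1 - (1 / q).toReal)

/-- `u` is a global solution in
`X = (C ∩ L^∞)([0,∞); L¹) ∩ (C ∩ L^∞)((0,∞); L^∞)` of the integral equation
`u(t) = e^{tΔ}φ + ∫₀ᵗ e^{(t-s)Δ} f(u(s)) ds`. -/
structure IsGlobalSolution (n : ℕ) (f : ℝ → ℝ) (φ : Rn n → ℝ) (u : ℝ → Rn n → ℝ) : Prop where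
  memL1 : ∀ t : ℝ, 0 ≤ t → MemLp (u t) 1 (volume : Measure (Rn n))
  memLinf : ∀ t : ℝ, 0 < t → MemLp (u t) ⊤ (volume : Measure (Rn n))
  bddL1 : ∃ M : ℝ≥0∞, M ≠ ⊤ ∧ ∀ t : ℝ, 0 ≤ t → eLpNorm (u t) 1 (volume : Measure (Rn n)) ≤ M
  bddLinf : ∃ M : ℝ≥0∞, M ≠ ⊤ ∧ ∀ t : ℝ, 0 < t → eLpNorm (u t) ⊤ (volume : Measure (Rn n)) ≤ M
  contL1 : ∀ t₀ : ℝ, 0 ≤ t₀ →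
    Tendsto (fun t => eLpNorm (fun x => u t x - u t₀ x) 1 (volume : Measure (Rn n)))
      (nhdsWithin t₀ (Set.Ici 0)) (nhds 0)
  contLinf : ∀ t₀ : ℝ, 0 < t₀ →
    Tendsto (fun t => eLpNorm (fun x => u t x - u t₀ x) ⊤ (volume : Measure (Rn n)))
      (nhdsWithin t₀ (Set.Ioi 0)) (nhds 0)
  inteq : ∀ t : ℝ, 0 ≤ t → ∀ᵐ x : Rn n, u t x =
    heatSG n t φ x + ∫ s in Set.Ioc (0 : ℝ) t, heatSG n (t - s) (fun y => f (u s y)) x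

/-- `sup_{q ∈ [1,∞]} sup_{t ≥ 0} (1+t)^{(n/2)(1−1/q)} ‖u(t)‖_q < +∞`. -/
def DecayBound (n : ℕ) (u : ℝ → Rn n → ℝ) : Prop :=
  ∃ M : ℝ≥0∞, M ≠ ⊤ ∧ ∀ q : ℝ≥0∞, 1 ≤ q → ∀ t : ℝ, 0 ≤ t →
    ENNReal.ofReal ((1 + t) ^ expo n q) * eLpNorm (u t) q (volume : Measure (Rn n)) ≤ M

/-- `ε₀` is a smallness constant: for every initial datum `φ ∈ L¹ ∩ L^∞` with
`‖φ‖₁ + ‖φ‖_∞ ≤ ε₀` there is a global solution in `X`, satisfying the decay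
estimate, and it is unique in `X`. -/
def IsSmallnessConstant (n : ℕ) (f : ℝ → ℝ) (ε₀ : ℝ) : Prop :=
  0 < ε₀ ∧ ∀ φ : Rn n → ℝ, MemLp φ 1 (volume : Measure (Rn n)) →
    MemLp φ ⊤ (volume : Measure (Rn n)) →
    eLpNorm φ 1 (volume : Measure (Rn n)) + eLpNorm φ ⊤ (volume : Measure (Rn n)) ≤
      ENNReal.ofReal ε₀ →
    ∃ u : ℝ → Rn n → ℝ, (IsGlobalSolution n f φ u ∧ DecayBound n u) ∧
      ∀ v : ℝ → Rn n → ℝ, IsGlobalSolution n f φ v →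
        ∀ t : ℝ, 0 ≤ t → v t =ᵐ[(volume : Measure (Rn n))] u t

/-- `φ₁ = φ + ∫₀^∞ f(u(s)) ds`. -/
noncomputable def phiOne (n : ℕ) (f : ℝ → ℝ) (φ : Rn n → ℝ) (u : ℝ → Rn n → ℝ) : Rn n → ℝ :=
  fun x => φ x + ∫ s in Set.Ioi (0 : ℝ), f (u s x)

/-- The approximating sequence: `u₁(t) = e^{tΔ}φ₁` and for `N ≥ 2`,
`u_N(t) = e^{tΔ}φ_N + ∫₀ᵗ e^{(t−s)Δ} f(u_{N−1}(s)) ds` with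
`φ_N = φ + ∫₀^∞ (f(u(s)) − f(u_{N−1}(s))) ds`. -/
noncomputable def uSeq (n : ℕ) (f : ℝ → ℝ) (φ : Rn n → ℝ) (u : ℝ → Rn n → ℝ) :
    ℕ → ℝ → Rn n → ℝ
  | 0 => fun _ _ => 0
  | 1 => fun t => heatSG n t (phiOne n f φ u)
  | (N + 2) => fun t x =>
      heatSG n t (fun y => φ y +
        ∫ s in Set.Ioi (0 : ℝ), (f (u s y) - f (uSeq n f φ u (N + 1) s y))) x +
      ∫ s in Set.Ioc (0 : ℝ) t, heatSG n (t - s) (fun y => f (uSeq n f φ u (N + 1) s y)) x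

/-- The moment coefficient `c_α = (1/α!) ∫ y^α ψ(y) dy`. -/
noncomputable def momentCoeff (n : ℕ) (ψ : Rn n → ℝ) (α : Fin n → ℕ) : ℝ :=
  (∏ j, ((α j).factorial : ℝ))⁻¹ * ∫ y : Rn n, mono n α y * ψ y

/-- The `m`-th order asymptotic profile
`Σ_{k=0}^m 2^{−k} t^{−k/2} Σ_{|α|=k} c_α δ_t(h_α G₁)` with moments of `ψ`. -/
noncomputable def expansion (n m : ℕ) (ψ : Rn n → ℝ) (t : ℝ) (x : Rn n) : ℝ :=
  ∑ k ∈ Finset.range (m + 1), (2 : ℝ) ^ (-(k : ℤ)) * t ^ (-(k : ℝ) / 2) *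
    ∑ α ∈ Finset.Nat.antidiagonalTuple n k,
      momentCoeff n ψ α * dil n t (fun z => hPoly n α z * gaussOne n z) x

end

/-!
Against the Gauss kernel the commutator is
`x^α e^{tΔ}φ(x) − e^{tΔ}(x^α φ)(x) = ∫ G_t(x − y) (x^α − y^α) φ(y) dy`.
Writing `x = (x − y) + y` coordinatewise gives
`|x^α − y^α| ≤ (|x − y| + |y|)^m − |y|^m ≤ m 2^{m−1} (|x − y|^m + |x − y| |y|^{m−1})`,
so by Tonelli and translation invariance the `L¹` norm is at most a combination of
`‖φ‖₁ ∫ |z|^m G_t` and `‖|x|^{m−1} φ‖₁ ∫ |z| G_t`.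
The moment `∫ |z|^i G_t(z) dz` is `O(t^{i/2})`, because `|z|^i e^{−|z|²/8t} ≤ C_i t^{i/2}`.
-/

open Finset

theorem abs_prod_sub_prod_le {ι R : Type*} [CommRing R] [LinearOrder R] [IsStrictOrderedRing R]
    (s : Finset ι) {f g D G : ι → R} (hfg : ∀ i ∈ s, |f i - g i| ≤ D i)
    (hg : ∀ i ∈ s, |g i| ≤ G i) :
    |∏ i ∈ s, f i - ∏ i ∈ s, g i| ≤ ∏ i ∈ s, (D i + G i) - ∏ i ∈ s, G i := by
  classical
  induction s using Finset.induction_on with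
  | empty => simp
  | insert a s ha ih =>
    simp only [forall_mem_insert] at hfg hg
    have hf : |∏ i ∈ s, f i| ≤ ∏ i ∈ s, (D i + G i) := by
      rw [abs_prod]
      refine prod_le_prod (fun _ _ => abs_nonneg _) fun i hi => ?_
      linarith [abs_sub_abs_le_abs_sub (f i) (g i), hfg.2 i hi, hg.2 i hi]
    have hD : 0 ≤ D a := (abs_nonneg _).trans hfg.1
    rw [prod_insert ha, prod_insert ha, prod_insert ha, prod_insert ha]
    calc |f a * ∏ i ∈ s, f i - g a * ∏ i ∈ s, g i|
        = |(f a - g a) * ∏ i ∈ s, f i + g a * (∏ i ∈ s, f i - ∏ i ∈ s, g i)| := by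
          congr 1; ring
      _ ≤ |f a - g a| * |∏ i ∈ s, f i| + |g a| * |∏ i ∈ s, f i - ∏ i ∈ s, g i| := by
        rw [← abs_mul, ← abs_mul]; exact abs_add_le _ _
      _ ≤ D a * ∏ i ∈ s, (D i + G i) + G a * (∏ i ∈ s, (D i + G i) - ∏ i ∈ s, G i) := by
        have ih := ih hfg.2 hg.2
        exact add_le_add (mul_le_mul hfg.1 hf (abs_nonneg _) hD)
          (mul_le_mul hg.1 ih (abs_nonneg _) ((abs_nonneg _).trans hg.1))
      _ = (D a + G a) * ∏ i ∈ s, (D i + G i) - G a * ∏ i ∈ s, G i := by ring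

theorem abs_pow_sub_pow_le_add_pow_sub_pow {R : Type*} [CommRing R] [LinearOrder R]
    [IsStrictOrderedRing R] {a b D G : R} (hab : |a - b| ≤ D) (hb : |b| ≤ G) (k : ℕ) :
    |a ^ k - b ^ k| ≤ (D + G) ^ k - G ^ k := by
  simpa using abs_prod_sub_prod_le (range k) (fun _ _ => hab) (fun _ _ => hb)

theorem abs_mono_sub_mono_le {n : ℕ} (α : Fin n → ℕ) (x y : Rn n) :
    |mono n α x - mono n α y| ≤ (‖x - y‖ + ‖y‖) ^ (∑ j, α j) - ‖y‖ ^ (∑ j, α j) := by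
  have hcoord (z : Rn n) (j : Fin n) : |z j| ≤ ‖z‖ := PiLp.norm_apply_le z j
  have h := abs_prod_sub_prod_le univ (D := fun j => (‖x - y‖ + ‖y‖) ^ α j - ‖y‖ ^ α j)
    (G := fun j => ‖y‖ ^ α j) (f := fun j => x j ^ α j) (g := fun j => y j ^ α j)
    (fun j _ => abs_pow_sub_pow_le_add_pow_sub_pow (hcoord (x - y) j) (hcoord y j) (α j))
    (fun j _ => by rw [abs_pow]; exact pow_le_pow_left₀ (abs_nonneg _) (hcoord y j) _)
  simpa only [mono, sub_add_cancel, prod_pow_eq_pow_sum] using h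

theorem add_pow_sub_pow_le {a b : ℝ} (ha : 0 ≤ a) (hb : 0 ≤ b) (m : ℕ) :
    (a + b) ^ m - b ^ m ≤ m * 2 ^ (m - 1) * (a ^ m + a * b ^ (m - 1)) := by
  rcases m with _ | k
  · simp
  have hmv : (a + b) ^ (k + 1) - b ^ (k + 1) ≤ a * (k + 1) * (a + b) ^ k := by
    simpa [abs_of_nonneg ha, abs_of_nonneg hb, abs_of_nonneg (add_nonneg ha hb), ha, hb]
      using (le_abs_self _).trans (abs_pow_sub_pow_le (a + b) b (k + 1))
  have hconv : (a + b) ^ k ≤ 2 ^ k * (a ^ k + b ^ k) :=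
    (add_pow_le ha hb k).trans (by gcongr; exacts [by norm_num, Nat.sub_le k 1])
  calc (a + b) ^ (k + 1) - b ^ (k + 1) ≤ a * (k + 1) * (2 ^ k * (a ^ k + b ^ k)) := by
        refine hmv.trans ?_; gcongr
    _ = ((k + 1 : ℕ) : ℝ) * 2 ^ (k + 1 - 1) * (a ^ (k + 1) + a * b ^ (k + 1 - 1)) := by
        simp only [Nat.add_sub_cancel]; push_cast; ring

theorem pow_le_mul_exp_sq {s : ℝ} (hs : 0 ≤ s) (i : ℕ) :
    s ^ i ≤ (1 + 8 ^ i * i.factorial) * Real.exp (s ^ 2 / 8) := by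
  have hexp : 1 ≤ Real.exp (s ^ 2 / 8) := Real.one_le_exp (by positivity)
  have hsq : s ^ (2 * i) ≤ 8 ^ i * i.factorial * Real.exp (s ^ 2 / 8) := by
    have := Real.pow_div_factorial_le_exp (x := s ^ 2 / 8) (by positivity) i
    rw [div_pow, div_div, div_le_iff₀ (by positivity)] at this
    rw [pow_mul]; linarith
  rcases le_total s 1 with h | h
  · nlinarith [pow_le_one₀ hs h (n := i), pow_nonneg hs (2 * i)]
  · nlinarith [pow_le_pow_right₀ h (by omega : i ≤ 2 * i)]

section HeatKernel

variable {n : ℕ} {t : ℝ}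

theorem heatKernel_nonneg (ht : 0 ≤ t) (x : Rn n) : 0 ≤ heatKernel n t x := by
  unfold heatKernel; positivity

theorem continuous_heatKernel (t : ℝ) : Continuous (heatKernel n t) := by
  unfold heatKernel; fun_prop

theorem heatKernel_le (ht : 0 ≤ t) (x : Rn n) :
    heatKernel n t x ≤ (4 * π * t) ^ (-(n : ℝ) / 2) := by
  unfold heatKernel
  have : Real.exp (-‖x‖ ^ 2 / (4 * t)) ≤ 1 :=
    Real.exp_le_one_iff.mpr
      (div_nonpos_of_nonpos_of_nonneg (by nlinarith [norm_nonneg x]) (by positivity))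
  exact mul_le_of_le_one_right (by positivity) this

theorem integrable_heatKernel_sub_mul (ht : 0 ≤ t) {φ : Rn n → ℝ} (hφ : Integrable φ) (x : Rn n) :
    Integrable (fun y => heatKernel n t (x - y) * φ y) :=
  hφ.bdd_mul (((continuous_heatKernel t).comp (continuous_sub_left x)).aestronglyMeasurable)
    (Eventually.of_forall fun y => by
      rw [Real.norm_of_nonneg (heatKernel_nonneg ht _)]; exact heatKernel_le ht _)

theorem mul_heatSG_sub_heatSG_mul (ht : 0 < t) {p φ : Rn n → ℝ} (hφ : Integrable φ)
    (hpφ : Integrable fun y => p y * φ y) (x : Rn n) :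
    p x * heatSG n t φ x - heatSG n t (fun y => p y * φ y) x =
      ∫ y, heatKernel n t (x - y) * ((p x - p y) * φ y) := by
  simp only [heatSG, if_neg ht.ne', mul_sub, sub_mul]
  rw [integral_sub, ← integral_const_mul]
  · simp only [mul_left_comm]
  · exact (integrable_heatKernel_sub_mul ht.le hφ x).const_mul _ |>.congr
      (Eventually.of_forall fun y => by ring)
  · exact integrable_heatKernel_sub_mul ht.le hpφ x |>.congr
      (Eventually.of_forall fun y => by ring)

end HeatKernel

theorem lintegral_ofReal_exp_neg_mul_sq_norm {V : Type*} [NormedAddCommGroup V]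
    [InnerProductSpace ℝ V] [FiniteDimensional ℝ V] [MeasurableSpace V] [BorelSpace V]
    {b : ℝ} (hb : 0 < b) :
    ∫⁻ v : V, ENNReal.ofReal (Real.exp (-b * ‖v‖ ^ 2)) =
      ENNReal.ofReal ((π / b) ^ (Module.finrank ℝ V / 2 : ℝ)) := by
  have hval := GaussianFourier.integral_rexp_neg_mul_sq_norm (V := V) hb
  have hint : Integrable fun v : V => Real.exp (-b * ‖v‖ ^ 2) :=
    Integrable.of_integral_ne_zero (by rw [hval]; positivity)
  rw [← hval, ofReal_integral_eq_lintegral_ofReal hint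
    (Eventually.of_forall fun _ => (Real.exp_pos _).le)]

section Moments

variable {n : ℕ} {t : ℝ}

theorem norm_pow_mul_heatKernel_le (i : ℕ) (ht : 0 < t) (z : Rn n) :
    ‖z‖ ^ i * heatKernel n t z ≤ (1 + 8 ^ i * i.factorial) * t ^ ((i : ℝ) / 2) *
      ((4 * π * t) ^ (-(n : ℝ) / 2) * Real.exp (-(8 * t)⁻¹ * ‖z‖ ^ 2)) := by
  set s := ‖z‖ / √t
  have hpow : ‖z‖ ^ i = √t ^ i * s ^ i := by
    rw [← mul_pow, mul_div_cancel₀ _ (Real.sqrt_pos.mpr ht).ne']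
  -- half of the Gaussian decay absorbs the polynomial weight
  have hexp : Real.exp (s ^ 2 / 8) * Real.exp (-‖z‖ ^ 2 / (4 * t)) =
      Real.exp (-(8 * t)⁻¹ * ‖z‖ ^ 2) := by
    rw [← Real.exp_add, div_pow, Real.sq_sqrt ht.le]
    congr 1; field_simp; ring
  unfold heatKernel
  calc ‖z‖ ^ i * ((4 * π * t) ^ (-(n : ℝ) / 2) * Real.exp (-‖z‖ ^ 2 / (4 * t)))
      = √t ^ i * s ^ i * ((4 * π * t) ^ (-(n : ℝ) / 2) * Real.exp (-‖z‖ ^ 2 / (4 * t))) := by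
        rw [hpow]
    _ ≤ √t ^ i * ((1 + 8 ^ i * i.factorial) * Real.exp (s ^ 2 / 8)) *
          ((4 * π * t) ^ (-(n : ℝ) / 2) * Real.exp (-‖z‖ ^ 2 / (4 * t))) := by
        gcongr; exact pow_le_mul_exp_sq (by positivity) i
    _ = _ := by rw [Real.rpow_div_two_eq_sqrt _ ht.le, ← hexp, Real.rpow_natCast]; ring

theorem lintegral_norm_pow_mul_heatKernel_le (i : ℕ) (ht : 0 < t) :
    ∫⁻ z : Rn n, ENNReal.ofReal (‖z‖ ^ i * heatKernel n t z) ≤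
      ENNReal.ofReal ((1 + 8 ^ i * i.factorial) * 2 ^ ((n : ℝ) / 2) * t ^ ((i : ℝ) / 2)) := by
  set c : ℝ := (1 + 8 ^ i * i.factorial) * t ^ ((i : ℝ) / 2) * (4 * π * t) ^ (-(n : ℝ) / 2)
  have hc : 0 ≤ c := by positivity
  calc ∫⁻ z : Rn n, ENNReal.ofReal (‖z‖ ^ i * heatKernel n t z)
      ≤ ∫⁻ z : Rn n, ENNReal.ofReal c * ENNReal.ofReal (Real.exp (-(8 * t)⁻¹ * ‖z‖ ^ 2)) := by
        refine lintegral_mono fun z => ?_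
        rw [← ENNReal.ofReal_mul hc]
        exact ENNReal.ofReal_le_ofReal ((norm_pow_mul_heatKernel_le i ht z).trans_eq (by ring))
    _ = ENNReal.ofReal (c * (π / (8 * t)⁻¹) ^ ((n : ℝ) / 2)) := by
        rw [lintegral_const_mul' _ _ ENNReal.ofReal_ne_top,
          lintegral_ofReal_exp_neg_mul_sq_norm (by positivity), finrank_euclideanSpace_fin,
          ENNReal.ofReal_mul hc]
    _ = _ := by
        have h4πt : 0 < 4 * π * t := by positivity
        rw [show π / (8 * t)⁻¹ = 2 * (4 * π * t) by field_simp; ring,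
          Real.mul_rpow zero_le_two h4πt.le]
        simp only [c, neg_div, Real.rpow_neg h4πt.le]
        field_simp

end Moments

section Convolution

variable {G : Type*} [MeasurableSpace G] [AddGroup G] [MeasurableAdd₂ G] [MeasurableNeg G]
  {μ : Measure G} {k g : G → ℝ≥0∞}

theorem aemeasurable_comp_sub_mul (hk : Measurable k) (hg : AEMeasurable g μ) :
    AEMeasurable (Function.uncurry fun x y => k (x - y) * g y) (μ.prod μ) :=
  (hk.comp measurable_sub).aemeasurable.mul hg.comp_snd

theorem lintegral_lintegral_comp_sub_mul [SFinite μ] [μ.IsAddRightInvariant] (hk : Measurable k)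
    (hg : AEMeasurable g μ) :
    ∫⁻ x, ∫⁻ y, k (x - y) * g y ∂μ ∂μ = (∫⁻ z, k z ∂μ) * ∫⁻ y, g y ∂μ := by
  rw [lintegral_lintegral_swap (aemeasurable_comp_sub_mul hk hg), ← lintegral_const_mul'' _ hg]
  refine lintegral_congr fun y => ?_
  rw [lintegral_mul_const (f := fun x => k (x - y)) _ (hk.comp (measurable_sub_const y)),
    lintegral_sub_right_eq_self]

end Convolution

section Commutator

variable {n m : ℕ} {t : ℝ} {φ : Rn n → ℝ} {α : Fin n → ℕ}

theorem enorm_heatKernel_mul_mono_sub_le (ht : 0 ≤ t) (hα : ∑ j, α j = m) (x y : Rn n) :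
    ‖heatKernel n t (x - y) * ((mono n α x - mono n α y) * φ y)‖ₑ ≤
      ENNReal.ofReal (m * 2 ^ (m - 1)) *
        (ENNReal.ofReal (‖x - y‖ ^ m * heatKernel n t (x - y)) * ‖φ y‖ₑ +
          ENNReal.ofReal (‖x - y‖ * heatKernel n t (x - y)) * ‖‖y‖ ^ (m - 1) * φ y‖ₑ) := by
  have hG := heatKernel_nonneg ht (x - y)
  have hmono : |mono n α x - mono n α y| ≤
      m * 2 ^ (m - 1) * (‖x - y‖ ^ m + ‖x - y‖ * ‖y‖ ^ (m - 1)) :=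
    hα ▸ (abs_mono_sub_mono_le α x y).trans (add_pow_sub_pow_le (norm_nonneg _) (norm_nonneg _) _)
  simp only [Real.enorm_eq_ofReal_abs]
  rw [← ENNReal.ofReal_mul (by positivity), ← ENNReal.ofReal_mul (by positivity),
    ← ENNReal.ofReal_add (by positivity) (by positivity), ← ENNReal.ofReal_mul (by positivity)]
  refine ENNReal.ofReal_le_ofReal ?_
  rw [abs_mul, abs_mul, abs_mul, abs_of_nonneg hG, abs_pow, abs_norm]
  calc heatKernel n t (x - y) * (|mono n α x - mono n α y| * |φ y|)
      ≤ heatKernel n t (x - y) *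
          (m * 2 ^ (m - 1) * (‖x - y‖ ^ m + ‖x - y‖ * ‖y‖ ^ (m - 1)) * |φ y|) := by
        gcongr
    _ = _ := by ring

theorem eLpNorm_mono_mul_heatSG_sub_le_moments (ht : 0 < t) (hφ : Integrable φ)
    (hφα : Integrable fun y => mono n α y * φ y) (hα : ∑ j, α j = m) :
    eLpNorm (fun x => mono n α x * heatSG n t φ x - heatSG n t (fun y => mono n α y * φ y) x)
        1 volume ≤
      ENNReal.ofReal (m * 2 ^ (m - 1)) *
        ((∫⁻ z : Rn n, ENNReal.ofReal (‖z‖ ^ m * heatKernel n t z)) * eLpNorm φ 1 volume +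
          (∫⁻ z : Rn n, ENNReal.ofReal (‖z‖ * heatKernel n t z)) *
            eLpNorm (fun y => ‖y‖ ^ (m - 1) * φ y) 1 volume) := by
  set k : ℕ → Rn n → ℝ≥0∞ := fun i z => ENNReal.ofReal (‖z‖ ^ i * heatKernel n t z)
  have hk (i : ℕ) : Measurable (k i) :=
    ((continuous_norm.pow i).mul (continuous_heatKernel t)).measurable.ennreal_ofReal
  have hg₀ : AEMeasurable (fun y => ‖φ y‖ₑ) := hφ.aestronglyMeasurable.enorm
  have hg₁ : AEMeasurable (fun y : Rn n => ‖‖y‖ ^ (m - 1) * φ y‖ₑ) :=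
    ((continuous_norm.pow _).aestronglyMeasurable.mul hφ.aestronglyMeasurable).enorm
  simp only [eLpNorm_one_eq_lintegral_enorm]
  calc ∫⁻ x, ‖mono n α x * heatSG n t φ x - heatSG n t (fun y => mono n α y * φ y) x‖ₑ
      = ∫⁻ x, ‖∫ y, heatKernel n t (x - y) * ((mono n α x - mono n α y) * φ y)‖ₑ := by
        simp_rw [mul_heatSG_sub_heatSG_mul ht hφ hφα]
    _ ≤ ∫⁻ x, ∫⁻ y, ENNReal.ofReal (m * 2 ^ (m - 1)) *
          (k m (x - y) * ‖φ y‖ₑ + k 1 (x - y) * ‖‖y‖ ^ (m - 1) * φ y‖ₑ) := by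
        refine lintegral_mono fun x => (enorm_integral_le_lintegral_enorm _).trans ?_
        refine lintegral_mono fun y => ?_
        simpa only [k, pow_one] using enorm_heatKernel_mul_mono_sub_le ht.le hα x y
    _ = ENNReal.ofReal (m * 2 ^ (m - 1)) *
          ∫⁻ x, (∫⁻ y, k m (x - y) * ‖φ y‖ₑ) + ∫⁻ y, k 1 (x - y) * ‖‖y‖ ^ (m - 1) * φ y‖ₑ := by
        simp_rw [lintegral_const_mul' _ _ ENNReal.ofReal_ne_top]
        congr 1
        refine lintegral_congr fun x => lintegral_add_left' ?_ _
        exact ((hk m).comp (measurable_const_sub x)).aemeasurable.mul hg₀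
    _ = _ := by
        rw [lintegral_add_left' (aemeasurable_comp_sub_mul (hk m) hg₀).lintegral_prod_right,
          lintegral_lintegral_comp_sub_mul (hk m) hg₀, lintegral_lintegral_comp_sub_mul (hk 1) hg₁]
        simp only [k, pow_one]

end Commutator

theorem exists_eLpNorm_mono_mul_heatSG_sub_le (n m : ℕ) :
    ∃ C : ℝ, 0 ≤ C ∧ ∀ ⦃t : ℝ⦄, 0 < t → ∀ ⦃φ : Rn n → ℝ⦄, Integrable φ →
      ∀ ⦃α : Fin n → ℕ⦄, ∑ j, α j = m → Integrable (fun y => mono n α y * φ y) →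
        eLpNorm (fun x => mono n α x * heatSG n t φ x - heatSG n t (fun y => mono n α y * φ y) x)
            1 volume ≤
          ENNReal.ofReal C *
            (ENNReal.ofReal (t ^ ((1 : ℝ) / 2)) *
                eLpNorm (fun x : Rn n => ‖x‖ ^ (m - 1) * φ x) 1 volume +
              ENNReal.ofReal (t ^ ((1 : ℝ) / 2) + t ^ ((m : ℝ) / 2)) * eLpNorm φ 1 volume) := by
  set c : ℕ → ℝ := fun i => (1 + 8 ^ i * i.factorial) * 2 ^ ((n : ℝ) / 2)
  refine ⟨m * 2 ^ (m - 1) * (c 1 + c m), by positivity, fun t ht φ hφ α hα hφα => ?_⟩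
  have hM₁ : ∫⁻ z : Rn n, ENNReal.ofReal (‖z‖ * heatKernel n t z) ≤
      ENNReal.ofReal (c 1 * t ^ ((1 : ℝ) / 2)) := by
    simpa only [c, pow_one, Nat.cast_one] using lintegral_norm_pow_mul_heatKernel_le (n := n) 1 ht
  have hMm : ∫⁻ z : Rn n, ENNReal.ofReal (‖z‖ ^ m * heatKernel n t z) ≤
      ENNReal.ofReal (c m * t ^ ((m : ℝ) / 2)) :=
    lintegral_norm_pow_mul_heatKernel_le m ht
  have hc (i : ℕ) : 0 ≤ c i := by positivity
  have hsqrt : 0 ≤ t ^ ((1 : ℝ) / 2) := by positivity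
  have hpow : 0 ≤ t ^ ((m : ℝ) / 2) := by positivity
  refine (eLpNorm_mono_mul_heatSG_sub_le_moments ht hφ hφα hα).trans ?_
  rw [ENNReal.ofReal_mul (p := m * 2 ^ (m - 1)) (by positivity), mul_assoc]
  gcongr _ * ?_
  rw [mul_add, ← mul_assoc, ← mul_assoc, ← ENNReal.ofReal_mul (by positivity),
    ← ENNReal.ofReal_mul (by positivity), add_comm]
  gcongr
  · exact hM₁.trans (ENNReal.ofReal_le_ofReal (by nlinarith [mul_nonneg (hc m) hsqrt]))
  · exact hMm.trans (ENNReal.ofReal_le_ofReal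
      (by nlinarith [mul_nonneg (hc 1) hsqrt, mul_nonneg (hc 1) hpow, mul_nonneg (hc m) hsqrt]))

theorem stmt11_general (n : ℕ) (m : ℕ) :
    ∃ C : ℝ, 0 < C ∧ ∀ φ : Rn n → ℝ, MemL1m n m φ → ∀ t : ℝ, 0 < t →
      ∑ α ∈ Finset.Nat.antidiagonalTuple n m,
          eLpNorm
            (fun x => mono n α x * heatSG n t φ x - heatSG n t (fun y => mono n α y * φ y) x)
            1 (volume : Measure (Rn n)) ≤
        ENNReal.ofReal C *
          (ENNReal.ofReal (t ^ ((1 : ℝ) / 2)) *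
              eLpNorm (fun x : Rn n => ‖x‖ ^ (m - 1) * φ x) 1 (volume : Measure (Rn n)) +
            ENNReal.ofReal (t ^ ((1 : ℝ) / 2) + t ^ ((m : ℝ) / 2)) *
              eLpNorm φ 1 (volume : Measure (Rn n))) := by
  obtain ⟨C, hC, hcomm⟩ := exists_eLpNorm_mono_mul_heatSG_sub_le n m
  set N := (Nat.antidiagonalTuple n m).card
  refine ⟨N * C + 1, by positivity, fun φ hφ t ht => ?_⟩
  have hφ₀ : Integrable φ := by
    simpa [mono] using memLp_one_iff_integrable.mp (hφ 0 (by simp))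
  calc _ ≤ ∑ _α ∈ Nat.antidiagonalTuple n m, ENNReal.ofReal C * _ :=
        sum_le_sum fun α hα => hcomm ht hφ₀ (Nat.mem_antidiagonalTuple.mp hα)
          (memLp_one_iff_integrable.mp (hφ α (Nat.mem_antidiagonalTuple.mp hα).le))
    _ = ENNReal.ofReal (N * C) * _ := by
        rw [sum_const, nsmul_eq_mul, ENNReal.ofReal_mul (by positivity), ENNReal.ofReal_natCast,
          mul_assoc]
    _ ≤ _ := by gcongr; linarith

/-- Theorem 2.6: commutator estimate
`Σ_{|α|=m} ‖x^α e^{tΔ}φ − e^{tΔ}(x^α φ)‖₁ ≤ C_m { t^{1/2} ‖|x|^{m−1}φ‖₁ + (t^{1/2}+t^{m/2}) ‖φ‖₁ }`. -/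
theorem stmt11 (n : ℕ) (hn : 1 ≤ n) (m : ℕ) (hm : 1 ≤ m) :
    ∃ C : ℝ, 0 < C ∧ ∀ φ : Rn n → ℝ, MemL1m n m φ → ∀ t : ℝ, 0 < t →
      ∑ α ∈ Finset.Nat.antidiagonalTuple n m,
          eLpNorm
            (fun x => mono n α x * heatSG n t φ x - heatSG n t (fun y => mono n α y * φ y) x)
            1 (volume : Measure (Rn n)) ≤
        ENNReal.ofReal C *
          (ENNReal.ofReal (t ^ ((1 : ℝ) / 2)) *
              eLpNorm (fun x : Rn n => ‖x‖ ^ (m - 1) * φ x) 1 (volume : Measure (Rn n)) +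
            ENNReal.ofReal (t ^ ((1 : ℝ) / 2) + t ^ ((m : ℝ) / 2)) *
              eLpNorm φ 1 (volume : Measure (Rn n))) :=
  stmt11_general n m
end

section
/- Let n ≥ 1, let φ ∈ L¹(ℝⁿ), and let q ∈ [1,∞]. Set c₀ = ∫_{ℝⁿ} φ(y) dy. Then lim_{t → ∞} t^{(n/2)(1−1/q)} ‖e^{tΔ}φ‖_q = |c₀| ‖G₁‖_q, where ‖G₁‖_q = (4π)^{−(n/2)(1−1/q)} q^{−n/(2q)} for 1 ≤ q < ∞ and ‖G₁‖_∞ = (4π)^{−n/2}. -/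
open MeasureTheory Real Filter
open scoped ENNReal Topology NNReal

/-!
The heat kernel is a dilate of `G₁`: `G_t = δ_t G₁` with `δ_t ψ = t^{-n/2} ψ(t^{-1/2} ·)`.
Hence `e^{tΔ}φ = δ_t F_ε` with `ε = t^{-1/2}` and `F_ε(x) = ∫ G₁(x - ε y) φ(y) dy`, and `δ_t`
multiplies the `L^q` norm by exactly `t^{-(n/2)(1-1/q)}`. So the claim is that `F_ε → c₀ G₁`
in `L^q` as `ε → 0`. Writing `F_ε - c₀ G₁ = ∫ (G₁(· - ε y) - G₁) φ(y) dy`, the `L¹` norm is at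
most `∫ |φ(y)| ‖G₁(· - ε y) - G₁‖₁ dy` and the `L^∞` norm at most
`∫ |φ(y)| min(L |ε| |y|, 2 ‖G₁‖_∞) dy` (`L` a Lipschitz constant of `G₁`); both tend to `0` by
dominated convergence, and `‖f‖_q ≤ ‖f‖_∞^{1-1/q} ‖f‖₁^{1/q}` covers `1 < q < ∞`. The value of
`‖G₁‖_q` is a Gaussian integral.
-/

section LpSeminorm

variable {α E : Type*} [MeasurableSpace α] {μ : Measure α} [NormedAddCommGroup E]

theorem eLpNorm_le_eLpNorm_top_rpow_mul_eLpNorm_one_rpow {f : α → E} {q : ℝ≥0∞}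
    (hq : 1 ≤ q) (hq_top : q ≠ ⊤) (hf : eLpNorm f ⊤ μ ≠ ⊤) :
    eLpNorm f q μ ≤ eLpNorm f ⊤ μ ^ (1 - 1 / q.toReal) * eLpNorm f 1 μ ^ (1 / q.toReal) := by
  set r := q.toReal
  have hr : 1 ≤ r := by simpa using ENNReal.toReal_mono hq_top hq
  have hr0 : 0 < r := by linarith
  have hpow : ∫⁻ x, ‖f x‖ₑ ^ r ∂μ ≤ eLpNorm f ⊤ μ ^ (r - 1) * eLpNorm f 1 μ := by
    rw [eLpNorm_one_eq_lintegral_enorm,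
      ← lintegral_const_mul' _ _ (ENNReal.rpow_ne_top_of_nonneg (by linarith) hf)]
    refine lintegral_mono_ae ?_
    filter_upwards [enorm_ae_le_eLpNormEssSup f μ] with x hx
    calc ‖f x‖ₑ ^ r = ‖f x‖ₑ ^ (r - 1) * ‖f x‖ₑ := by
          simpa using ENNReal.rpow_add_of_nonneg (x := ‖f x‖ₑ) (r - 1) 1 (by linarith) zero_le_one
      _ ≤ eLpNorm f ⊤ μ ^ (r - 1) * ‖f x‖ₑ := by
          rw [eLpNorm_exponent_top]; gcongr
  rw [eLpNorm_eq_lintegral_rpow_enorm_toReal (by positivity) hq_top]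
  calc (∫⁻ x, ‖f x‖ₑ ^ r ∂μ) ^ (1 / r)
      ≤ (eLpNorm f ⊤ μ ^ (r - 1) * eLpNorm f 1 μ) ^ (1 / r) := by gcongr
    _ = eLpNorm f ⊤ μ ^ (1 - 1 / r) * eLpNorm f 1 μ ^ (1 / r) := by
        rw [ENNReal.mul_rpow_of_nonneg _ _ (by positivity), ← ENNReal.rpow_mul]
        congr 2
        field_simp

theorem tendsto_eLpNorm_of_tendsto_eLpNorm_sub {ι : Type*} {l : Filter ι} {p : ℝ≥0∞}
    (hp : 1 ≤ p) {f : ι → α → E} {g : α → E} (hf : ∀ i, AEStronglyMeasurable (f i) μ)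
    (hg : AEStronglyMeasurable g μ) (hg_top : eLpNorm g p μ ≠ ⊤)
    (h : Tendsto (fun i => eLpNorm (f i - g) p μ) l (𝓝 0)) :
    Tendsto (fun i => eLpNorm (f i) p μ) l (𝓝 (eLpNorm g p μ)) := by
  have hupper : ∀ i, eLpNorm (f i) p μ ≤ eLpNorm g p μ + eLpNorm (f i - g) p μ := fun i => by
    simpa [add_comm] using eLpNorm_add_le ((hf i).sub hg) hg hp
  have hlower : ∀ i, eLpNorm g p μ - eLpNorm (f i - g) p μ ≤ eLpNorm (f i) p μ := fun i => by
    rw [tsub_le_iff_right, ← eLpNorm_neg (f i - g)]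
    simpa using eLpNorm_add_le (hf i) ((hf i).sub hg).neg hp
  refine tendsto_of_tendsto_of_tendsto_of_le_of_le ?_ ?_ hlower hupper
  · simpa using ENNReal.Tendsto.sub tendsto_const_nhds h (Or.inl hg_top)
  · simpa using (tendsto_const_nhds (x := eLpNorm g p μ)).add h

theorem enorm_le_eLpNorm_top_of_continuous [TopologicalSpace α] [μ.IsOpenPosMeasure]
    {f : α → E} (hf : Continuous f) (x : α) : ‖f x‖ₑ ≤ eLpNorm f ⊤ μ := by
  have hclosed : IsClosed {x | ‖f x‖ₑ ≤ eLpNormEssSup f μ} :=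
    isClosed_le hf.enorm continuous_const
  rw [eLpNorm_exponent_top]
  exact (hclosed.closure_eq ▸ (μ.dense_of_ae (enorm_ae_le_eLpNormEssSup f μ)).closure_eq ▸
    Set.mem_univ x :)

theorem tendsto_eLpNorm_zero_of_tendsto_eLpNorm_one_of_tendsto_eLpNorm_top {ι : Type*}
    {l : Filter ι} {f : ι → α → E} (hone : Tendsto (fun i => eLpNorm (f i) 1 μ) l (𝓝 0))
    (htop : Tendsto (fun i => eLpNorm (f i) ⊤ μ) l (𝓝 0)) {q : ℝ≥0∞} (hq : 1 ≤ q) :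
    Tendsto (fun i => eLpNorm (f i) q μ) l (𝓝 0) := by
  obtain rfl | hq_top := eq_or_ne q ⊤
  · exact htop
  have hr : 1 ≤ q.toReal := by simpa using ENNReal.toReal_mono hq_top hq
  have ha : 0 ≤ 1 - 1 / q.toReal := by
    rw [sub_nonneg, div_le_one (by linarith)]; exact hr
  have hb : 0 < 1 / q.toReal := by positivity
  have hinterp : ∀ᶠ i in l,
      eLpNorm (f i) q μ ≤
        eLpNorm (f i) ⊤ μ ^ (1 - 1 / q.toReal) * eLpNorm (f i) 1 μ ^ (1 / q.toReal) :=
    (htop.eventually (eventually_lt_nhds zero_lt_one)).mono fun i hi =>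
      eLpNorm_le_eLpNorm_top_rpow_mul_eLpNorm_one_rpow hq hq_top (hi.trans ENNReal.one_lt_top).ne
  have hA := ((ENNReal.continuous_rpow_const (y := 1 - 1 / q.toReal)).tendsto 0).comp htop
  have hB := ((ENNReal.continuous_rpow_const (y := 1 / q.toReal)).tendsto 0).comp hone
  rw [ENNReal.zero_rpow_of_pos hb] at hB
  refine tendsto_of_tendsto_of_tendsto_of_le_of_le' tendsto_const_nhds ?_
    (Eventually.of_forall fun _ => zero_le) hinterp
  simpa using ENNReal.Tendsto.mul hA (Or.inr ENNReal.zero_ne_top) hB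
    (Or.inr (ENNReal.rpow_ne_top_of_nonneg ha ENNReal.zero_ne_top))

end LpSeminorm

section NormedGroup

variable {E : Type*} [NormedAddCommGroup E] [MeasurableSpace E] [BorelSpace E] {μ : Measure E}

theorem tendsto_eLpNorm_one_comp_sub_sub {g : E → ℝ} (hg : Continuous g) {D : E → ℝ}
    (hD : Integrable D μ) (hdom : ∀ᶠ h in 𝓝 (0 : E), ∀ x, |g (x - h)| ≤ D x) :
    Tendsto (fun h => eLpNorm (fun x => g (x - h) - g x) 1 μ) (𝓝 0) (𝓝 0) := by
  simp_rw [eLpNorm_one_eq_lintegral_enorm]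
  have hdom0 : ∀ x, |g x| ≤ D x := by simpa using hdom.self_of_nhds
  have key := tendsto_lintegral_filter_of_dominated_convergence (μ := μ)
    (F := fun h x => ‖g (x - h) - g x‖ₑ) (fun x => ENNReal.ofReal (2 * D x))
    (Eventually.of_forall fun h => ((hg.comp (continuous_id.sub continuous_const)).sub
      hg).measurable.enorm)
    (hdom.mono fun h hh => Eventually.of_forall fun x => by
      rw [Real.enorm_eq_ofReal_abs]
      exact ENNReal.ofReal_le_ofReal (by linarith [abs_sub (g (x - h)) (g x), hh x, hdom0 x]))
    (hD.const_mul 2).lintegral_lt_top.ne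
    (Eventually.of_forall fun x => (((hg.comp (continuous_const.sub continuous_id)).sub
      continuous_const).enorm.tendsto 0))
  simpa using key

theorem tendsto_lintegral_ofReal_min_mul_enorm {φ : E → ℝ} (hφ : Integrable φ μ) (L : ℝ) {C : ℝ}
    (hC : 0 ≤ C) :
    Tendsto (fun ε : ℝ => ∫⁻ y, ENNReal.ofReal (min (L * (|ε| * ‖y‖)) (2 * C)) * ‖φ y‖ₑ ∂μ)
      (𝓝 0) (𝓝 0) := by
  have key := tendsto_lintegral_filter_of_dominated_convergence' (μ := μ)
    (F := fun (ε : ℝ) y => ENNReal.ofReal (min (L * (|ε| * ‖y‖)) (2 * C)) * ‖φ y‖ₑ)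
    (fun y => ENNReal.ofReal (2 * C) * ‖φ y‖ₑ)
    (Eventually.of_forall fun ε => (Continuous.aemeasurable (by fun_prop)).ennreal_ofReal.mul
      hφ.1.enorm)
    (Eventually.of_forall fun ε => Eventually.of_forall fun y => by gcongr; exact min_le_right _ _)
    (by rw [lintegral_const_mul' _ _ ENNReal.ofReal_ne_top]
        exact ENNReal.mul_ne_top ENNReal.ofReal_ne_top hφ.2.ne)
    (Eventually.of_forall fun y => by
      have hlim : Tendsto (fun ε : ℝ => min (L * (|ε| * ‖y‖)) (2 * C)) (𝓝 0) (𝓝 0) := by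
        simpa [min_eq_left (by linarith : (0 : ℝ) ≤ 2 * C)] using
          (Continuous.tendsto (by fun_prop) 0 :
            Tendsto (fun ε : ℝ => min (L * (|ε| * ‖y‖)) (2 * C)) (𝓝 0) _)
      simpa using ENNReal.Tendsto.mul_const (b := ‖φ y‖ₑ) (ENNReal.tendsto_ofReal hlim)
        (Or.inr enorm_ne_top))
  simpa using key

theorem eLpNorm_comp_sub_sub_le [μ.IsAddRightInvariant] {g : E → ℝ}
    (hg : AEStronglyMeasurable g μ) {p : ℝ≥0∞} (hp : 1 ≤ p) (h : E) :
    eLpNorm (fun x => g (x - h) - g x) p μ ≤ 2 * eLpNorm g p μ := by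
  have hτ := measurePreserving_sub_right μ h
  calc eLpNorm (fun x => g (x - h) - g x) p μ
      ≤ eLpNorm (fun x => g (x - h)) p μ + eLpNorm g p μ :=
        eLpNorm_sub_le (hg.comp_measurePreserving hτ) hg hp
    _ = 2 * eLpNorm g p μ := by
        rw [← Function.comp_def, eLpNorm_comp_measurePreserving hg hτ, two_mul]

end NormedGroup

section RescaledConvolution

variable {E : Type*} [NormedAddCommGroup E] [NormedSpace ℝ E] [MeasurableSpace E] [BorelSpace E]
  {μ : Measure E}

variable (μ) in
noncomputable def rescaledConv (g : E → ℝ) (ε : ℝ) (φ : E → ℝ) (x : E) : ℝ :=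
  ∫ y, g (x - ε • y) * φ y ∂μ

variable {g φ : E → ℝ} {C : ℝ}

theorem rescaledConv_sub_integral_mul (hg : Continuous g) (hgC : ∀ x, |g x| ≤ C)
    (hφ : Integrable φ μ) (ε : ℝ) (x : E) :
    rescaledConv μ g ε φ x - (∫ y, φ y ∂μ) * g x =
      ∫ y, (g (x - ε • y) - g x) * φ y ∂μ := by
  have hint : Integrable (fun y => g (x - ε • y) * φ y) μ :=
    hφ.bdd_mul (hg.comp (continuous_const.sub (continuous_id.const_smul ε))).aestronglyMeasurable
      (Eventually.of_forall fun y => hgC _)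
  simp_rw [sub_mul]
  rw [integral_sub hint (hφ.const_mul (g x)), integral_const_mul, rescaledConv, mul_comm]

theorem eLpNorm_top_rescaledConv_sub_le {L : ℝ≥0} (hg : LipschitzWith L g)
    (hgC : ∀ x, |g x| ≤ C) (hφ : Integrable φ μ) (ε : ℝ) :
    eLpNorm (fun x => rescaledConv μ g ε φ x - (∫ y, φ y ∂μ) * g x) ⊤ μ ≤
      ∫⁻ y, ENNReal.ofReal (min (L * (|ε| * ‖y‖)) (2 * C)) * ‖φ y‖ₑ ∂μ := by
  rw [eLpNorm_exponent_top]
  refine essSup_le_of_ae_le _ (Eventually.of_forall fun x => ?_)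
  dsimp only
  rw [rescaledConv_sub_integral_mul hg.continuous hgC hφ]
  refine (enorm_integral_le_lintegral_enorm _).trans (lintegral_mono fun y => ?_)
  rw [enorm_mul, Real.enorm_eq_ofReal_abs]
  gcongr
  refine le_min ?_ ?_
  · simpa [dist_eq_norm, norm_smul] using hg.dist_le_mul (x - ε • y) x
  · linarith [abs_sub (g (x - ε • y)) (g x), hgC (x - ε • y), hgC x]

variable [FiniteDimensional ℝ E] [μ.IsAddHaarMeasure]

theorem eLpNorm_comp_smul {f : E → ℝ} (hf : AEStronglyMeasurable f μ) {r : ℝ} (hr : r ≠ 0)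
    (q : ℝ≥0∞) :
    eLpNorm (fun x => f (r • x)) q μ =
      ENNReal.ofReal |(r ^ Module.finrank ℝ E)⁻¹| ^ (1 / q).toReal * eLpNorm f q μ := by
  have hmap := μ.map_addHaar_smul hr
  have hc : ENNReal.ofReal |(r ^ Module.finrank ℝ E)⁻¹| ≠ 0 := by
    rw [Ne, ENNReal.ofReal_eq_zero, not_le]
    exact abs_pos.2 (inv_ne_zero (pow_ne_zero _ hr))
  rw [← Function.comp_def, ← eLpNorm_map_measure (by rw [hmap]; exact hf.smul_measure _)
    (measurable_const_smul r).aemeasurable, hmap, eLpNorm_smul_measure_of_ne_zero hc,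
    smul_eq_mul]

theorem aestronglyMeasurable_rescaledConv (hg : Continuous g)
    (hφ : AEStronglyMeasurable φ μ) (ε : ℝ) :
    AEStronglyMeasurable (rescaledConv μ g ε φ) μ :=
  AEStronglyMeasurable.integral_prod_right'
    ((hg.comp (continuous_fst.sub (continuous_snd.const_smul ε))).aestronglyMeasurable.mul
      hφ.comp_snd)

theorem eLpNorm_one_rescaledConv_sub_le (hg : Continuous g) (hgC : ∀ x, |g x| ≤ C)
    (hφ : Integrable φ μ) (ε : ℝ) :
    eLpNorm (fun x => rescaledConv μ g ε φ x - (∫ y, φ y ∂μ) * g x) 1 μ ≤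
      ∫⁻ y, ‖φ y‖ₑ * eLpNorm (fun x => g (x - ε • y) - g x) 1 μ ∂μ := by
  have hmeas : AEMeasurable (Function.uncurry fun x y => ‖(g (x - ε • y) - g x) * φ y‖ₑ)
      (μ.prod μ) :=
    (((hg.comp (continuous_fst.sub (continuous_snd.const_smul ε))).sub
      (hg.comp continuous_fst)).aestronglyMeasurable.mul hφ.1.comp_snd).enorm
  rw [eLpNorm_one_eq_lintegral_enorm]
  calc ∫⁻ x, ‖rescaledConv μ g ε φ x - (∫ y, φ y ∂μ) * g x‖ₑ ∂μ
      ≤ ∫⁻ x, ∫⁻ y, ‖(g (x - ε • y) - g x) * φ y‖ₑ ∂μ ∂μ := lintegral_mono fun x => by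
        rw [rescaledConv_sub_integral_mul hg hgC hφ]
        exact enorm_integral_le_lintegral_enorm _
    _ = ∫⁻ y, ‖φ y‖ₑ * eLpNorm (fun x => g (x - ε • y) - g x) 1 μ ∂μ := by
        simp_rw [eLpNorm_one_eq_lintegral_enorm]
        rw [lintegral_lintegral_swap hmeas]
        refine lintegral_congr fun y => ?_
        rw [← lintegral_const_mul' _ _ enorm_ne_top]
        simp_rw [enorm_mul, mul_comm]

theorem tendsto_lintegral_enorm_mul_eLpNorm_one_comp_smul_sub (hg : Continuous g)
    {D : E → ℝ} (hD : Integrable D μ) (hdom : ∀ᶠ h in 𝓝 (0 : E), ∀ x, |g (x - h)| ≤ D x)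
    (hφ : Integrable φ μ) :
    Tendsto (fun ε : ℝ => ∫⁻ y, ‖φ y‖ₑ * eLpNorm (fun x => g (x - ε • y) - g x) 1 μ ∂μ)
      (𝓝 0) (𝓝 0) := by
  have hg_int : Integrable g μ :=
    hD.mono' hg.aestronglyMeasurable (ae_of_all _ (by simpa using hdom.self_of_nhds))
  have hg_top : eLpNorm g 1 μ ≠ ⊤ := (memLp_one_iff_integrable.2 hg_int).eLpNorm_ne_top
  have hmeas : Measurable fun h => eLpNorm (fun x => g (x - h) - g x) 1 μ := by
    simp_rw [eLpNorm_one_eq_lintegral_enorm]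
    exact Measurable.lintegral_prod_right' (f := fun p : E × E => ‖g (p.2 - p.1) - g p.2‖ₑ)
      ((hg.comp (continuous_snd.sub continuous_fst)).sub (hg.comp continuous_snd)).measurable.enorm
  have key := tendsto_lintegral_filter_of_dominated_convergence' (μ := μ)
    (F := fun (ε : ℝ) y => ‖φ y‖ₑ * eLpNorm (fun x => g (x - ε • y) - g x) 1 μ)
    (fun y => ‖φ y‖ₑ * (2 * eLpNorm g 1 μ))
    (Eventually.of_forall fun ε =>
      hφ.1.enorm.mul (hmeas.comp (measurable_const_smul ε)).aemeasurable)
    (Eventually.of_forall fun ε => Eventually.of_forall fun y => by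
      gcongr; exact eLpNorm_comp_sub_sub_le hg.aestronglyMeasurable le_rfl _)
    (by rw [lintegral_mul_const' _ _ (by finiteness)]
        exact ENNReal.mul_ne_top hφ.2.ne (by finiteness))
    (Eventually.of_forall fun y => by
      have hy : Tendsto (fun ε : ℝ => ε • y) (𝓝 0) (𝓝 0) := by
        simpa using (continuous_id.tendsto (0 : ℝ)).smul_const y
      simpa using ENNReal.Tendsto.const_mul ((tendsto_eLpNorm_one_comp_sub_sub hg hD hdom).comp hy)
        (Or.inr enorm_ne_top))
  simpa using key

theorem tendsto_eLpNorm_rescaledConv_sub {L : ℝ≥0} (hg : LipschitzWith L g)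
    (hgC : ∀ x, |g x| ≤ C) {D : E → ℝ} (hD : Integrable D μ)
    (hdom : ∀ᶠ h in 𝓝 (0 : E), ∀ x, |g (x - h)| ≤ D x) (hφ : Integrable φ μ)
    {q : ℝ≥0∞} (hq : 1 ≤ q) :
    Tendsto (fun ε => eLpNorm (fun x => rescaledConv μ g ε φ x - (∫ y, φ y ∂μ) * g x) q μ)
      (𝓝 0) (𝓝 0) := by
  have hone := tendsto_of_tendsto_of_tendsto_of_le_of_le tendsto_const_nhds
    (tendsto_lintegral_enorm_mul_eLpNorm_one_comp_smul_sub hg.continuous hD hdom hφ)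
    (fun _ => zero_le) (eLpNorm_one_rescaledConv_sub_le hg.continuous hgC hφ)
  have htop := tendsto_of_tendsto_of_tendsto_of_le_of_le tendsto_const_nhds
    (tendsto_lintegral_ofReal_min_mul_enorm hφ L (by linarith [abs_nonneg (g 0), hgC 0]))
    (fun _ => zero_le) (eLpNorm_top_rescaledConv_sub_le hg hgC hφ)
  exact tendsto_eLpNorm_zero_of_tendsto_eLpNorm_one_of_tendsto_eLpNorm_top hone htop hq

theorem tendsto_eLpNorm_rescaledConv {L : ℝ≥0} (hg : LipschitzWith L g)
    (hgC : ∀ x, |g x| ≤ C) {D : E → ℝ} (hD : Integrable D μ)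
    (hdom : ∀ᶠ h in 𝓝 (0 : E), ∀ x, |g (x - h)| ≤ D x) (hφ : Integrable φ μ)
    {q : ℝ≥0∞} (hq : 1 ≤ q) (hgq : eLpNorm g q μ ≠ ⊤) :
    Tendsto (fun ε => eLpNorm (rescaledConv μ g ε φ) q μ) (𝓝 0)
      (𝓝 (ENNReal.ofReal |∫ y, φ y ∂μ| * eLpNorm g q μ)) := by
  rw [← Real.enorm_eq_ofReal_abs, ← eLpNorm_const_smul]
  exact tendsto_eLpNorm_of_tendsto_eLpNorm_sub hq
    (fun ε => aestronglyMeasurable_rescaledConv hg.continuous hφ.1 ε)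
    (hg.continuous.aestronglyMeasurable.const_smul _)
    (by rw [eLpNorm_const_smul]; exact ENNReal.mul_ne_top enorm_ne_top hgq)
    (tendsto_eLpNorm_rescaledConv_sub hg hgC hD hdom hφ hq)

end RescaledConvolution

theorem integrable_rexp_neg_mul_sq_norm {V : Type*} [NormedAddCommGroup V]
    [InnerProductSpace ℝ V] [FiniteDimensional ℝ V] [MeasurableSpace V] [BorelSpace V]
    {b : ℝ} (hb : 0 < b) : Integrable fun v : V => rexp (-b * ‖v‖ ^ 2) :=
  Integrable.of_integral_ne_zero <| by
    rw [GaussianFourier.integral_rexp_neg_mul_sq_norm hb]; positivity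

theorem abs_mul_rexp_neg_sq_div_four_le_one (s : ℝ) : |s| * rexp (-s ^ 2 / 4) ≤ 1 := by
  have hs : |s| ≤ rexp (s ^ 2 / 4) := by
    nlinarith [Real.add_one_le_exp (s ^ 2 / 4), sq_nonneg (|s| - 2), sq_abs s]
  calc |s| * rexp (-s ^ 2 / 4) ≤ rexp (s ^ 2 / 4) * rexp (-s ^ 2 / 4) := by gcongr
    _ = 1 := by rw [← Real.exp_add]; ring_nf; exact Real.exp_zero

theorem lipschitzWith_mul_rexp_neg_sq_div_four {c : ℝ} (hc : 0 ≤ c) :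
    LipschitzWith (c / 2).toNNReal fun s : ℝ => c * rexp (-s ^ 2 / 4) := by
  have hderiv : ∀ s : ℝ, HasDerivAt (fun s : ℝ => c * rexp (-s ^ 2 / 4))
      (c * (rexp (-s ^ 2 / 4) * (-(2 * s) / 4))) s := fun s => by
    simpa using (((hasDerivAt_pow 2 s).neg.div_const 4).exp).const_mul c
  refine lipschitzWith_of_nnnorm_deriv_le (fun s => (hderiv s).differentiableAt) fun s => ?_
  rw [(hderiv s).deriv, ← NNReal.coe_le_coe, coe_nnnorm, Real.coe_toNNReal _ (by positivity),
    Real.norm_eq_abs]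
  calc |c * (rexp (-s ^ 2 / 4) * (-(2 * s) / 4))| = c / 2 * (|s| * rexp (-s ^ 2 / 4)) := by
        rw [abs_mul, abs_mul, abs_of_nonneg hc, abs_of_pos (Real.exp_pos _), abs_div, abs_neg,
          abs_mul, abs_two, abs_of_pos (by norm_num : (0 : ℝ) < 4)]
        ring
    _ ≤ c / 2 := mul_le_of_le_one_right (by positivity) (abs_mul_rexp_neg_sq_div_four_le_one s)

section GaussKernel

variable {n : ℕ}

theorem gaussOne_apply (x : Rn n) :
    gaussOne n x = (4 * π) ^ (-(n : ℝ) / 2) * rexp (-‖x‖ ^ 2 / 4) := by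
  simp [gaussOne, heatKernel]

theorem gaussOne_pos (x : Rn n) : 0 < gaussOne n x := by
  rw [gaussOne_apply]; positivity

theorem abs_gaussOne_le (x : Rn n) : |gaussOne n x| ≤ (4 * π) ^ (-(n : ℝ) / 2) := by
  rw [abs_of_pos (gaussOne_pos x), gaussOne_apply]
  exact mul_le_of_le_one_right (by positivity)
    (Real.exp_le_one_iff.2 (by nlinarith [sq_nonneg ‖x‖]))

theorem lipschitzWith_gaussOne :
    LipschitzWith ((4 * π) ^ (-(n : ℝ) / 2) / 2).toNNReal (gaussOne n) := by
  have hcomp : gaussOne n = (fun s : ℝ => (4 * π) ^ (-(n : ℝ) / 2) * rexp (-s ^ 2 / 4)) ∘ norm :=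
    funext gaussOne_apply
  rw [hcomp]
  simpa using (lipschitzWith_mul_rexp_neg_sq_div_four (by positivity)).comp
    (lipschitzWith_one_norm (E := Rn n))

theorem gaussOne_sub_le {x h : Rn n} (hh : ‖h‖ ≤ 1) :
    gaussOne n (x - h) ≤
      (4 * π) ^ (-(n : ℝ) / 2) * rexp (1 / 4) * rexp (-(1 / 8) * ‖x‖ ^ 2) := by
  rw [gaussOne_apply, mul_assoc, ← Real.exp_add]
  gcongr
  have hx : ‖x‖ ≤ ‖x - h‖ + 1 := by
    linarith [norm_sub_norm_le x h]
  nlinarith [mul_self_le_mul_self (norm_nonneg x) hx, sq_nonneg (‖x - h‖ - 1)]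

theorem integral_gaussOne_rpow {r : ℝ} (hr : 0 < r) :
    ∫ x : Rn n, gaussOne n x ^ r =
      ((4 * π) ^ (-(n : ℝ) / 2)) ^ r * (4 * π / r) ^ ((n : ℝ) / 2) := by
  have hpow : ∀ x : Rn n,
      gaussOne n x ^ r = ((4 * π) ^ (-(n : ℝ) / 2)) ^ r * rexp (-(r / 4) * ‖x‖ ^ 2) := fun x => by
    rw [gaussOne_apply, Real.mul_rpow (by positivity) (Real.exp_pos _).le, ← Real.exp_mul]
    ring_nf
  simp_rw [hpow]
  rw [integral_const_mul, GaussianFourier.integral_rexp_neg_mul_sq_norm (by positivity),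
    finrank_euclideanSpace_fin]
  congr 2
  field_simp

theorem eLpNorm_gaussOne {q : ℝ≥0∞} (hq : q ≠ 0) (hq_top : q ≠ ⊤) :
    eLpNorm (gaussOne n) q volume =
      ENNReal.ofReal ((4 * π) ^ (-(expo n q)) * q.toReal ^ (-(n : ℝ) / (2 * q.toReal))) := by
  have hr : 0 < q.toReal := ENNReal.toReal_pos hq hq_top
  have hint : Integrable fun x : Rn n => gaussOne n x ^ q.toReal :=
    Integrable.of_integral_ne_zero (by rw [integral_gaussOne_rpow hr]; positivity)
  have hlint : ∫⁻ x, ‖gaussOne n x‖ₑ ^ q.toReal =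
      ENNReal.ofReal (∫ x, gaussOne n x ^ q.toReal) := by
    rw [ofReal_integral_eq_lintegral_ofReal hint
      (ae_of_all _ fun x => Real.rpow_nonneg (gaussOne_pos x).le _)]
    refine lintegral_congr fun x => ?_
    rw [Real.enorm_eq_ofReal_abs, abs_of_pos (gaussOne_pos x),
      ENNReal.ofReal_rpow_of_pos (gaussOne_pos x)]
  have hexpo : expo n q = (n : ℝ) / 2 - (n : ℝ) / (2 * q.toReal) := by
    rw [expo, one_div, ENNReal.toReal_inv]; field_simp
  rw [eLpNorm_eq_lintegral_rpow_enorm_toReal hq hq_top, hlint, integral_gaussOne_rpow hr,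
    ENNReal.ofReal_rpow_of_nonneg (by positivity) (by positivity), hexpo]
  congr 1
  generalize q.toReal = r at hr ⊢
  have hexp : (n : ℝ) / 2 * (1 / r) = (n : ℝ) / (2 * r) := by field_simp
  have h4π : (0 : ℝ) < 4 * π := by positivity
  rw [Real.mul_rpow (by positivity) (by positivity), ← Real.rpow_mul (by positivity),
    ← Real.rpow_mul (by positivity), ← Real.rpow_mul (by positivity), mul_one_div_cancel hr.ne',
    mul_one, Real.div_rpow h4π.le hr.le, hexp, neg_div (2 * r), Real.rpow_neg hr.le, neg_sub,
    Real.rpow_sub h4π, neg_div, Real.rpow_neg h4π.le]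
  ring

theorem eLpNorm_gaussOne_top :
    eLpNorm (gaussOne n) ⊤ volume = ENNReal.ofReal ((4 * π) ^ (-(n : ℝ) / 2)) := by
  refine le_antisymm ?_ ?_
  · rw [eLpNorm_exponent_top]
    exact eLpNormEssSup_le_of_ae_bound (ae_of_all _ abs_gaussOne_le)
  · have h0 := enorm_le_eLpNorm_top_of_continuous (μ := volume)
      lipschitzWith_gaussOne.continuous (0 : Rn n)
    rwa [Real.enorm_eq_ofReal_abs, abs_of_pos (gaussOne_pos 0), gaussOne_apply, norm_zero,
      sq, zero_mul, neg_zero, zero_div, Real.exp_zero, mul_one] at h0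

theorem eLpNorm_gaussOne_ne_top {q : ℝ≥0∞} (hq : q ≠ 0) : eLpNorm (gaussOne n) q volume ≠ ⊤ := by
  obtain rfl | hq_top := eq_or_ne q ⊤
  · rw [eLpNorm_gaussOne_top]; exact ENNReal.ofReal_ne_top
  · rw [eLpNorm_gaussOne hq hq_top]; exact ENNReal.ofReal_ne_top

theorem heatKernel_eq_dil {t : ℝ} (ht : 0 < t) : heatKernel n t = dil n t (gaussOne n) := by
  funext z
  have hsq : ‖t ^ (-(1 : ℝ) / 2) • z‖ ^ 2 = t⁻¹ * ‖z‖ ^ 2 := by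
    rw [norm_smul, mul_pow, Real.norm_eq_abs, sq_abs, ← Real.rpow_natCast, ← Real.rpow_mul ht.le,
      ← Real.rpow_neg_one]
    norm_num
  rw [dil, gaussOne_apply, hsq, heatKernel, Real.mul_rpow (by positivity) ht.le]
  field_simp

theorem heatSG_eq_dil_rescaledConv {t : ℝ} (ht : 0 < t) (φ : Rn n → ℝ) :
    heatSG n t φ = dil n t (rescaledConv volume (gaussOne n) (t ^ (-(1 : ℝ) / 2)) φ) := by
  funext x
  rw [heatSG, if_neg ht.ne', heatKernel_eq_dil ht, dil, rescaledConv, ← integral_const_mul]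
  simp_rw [dil, smul_sub, mul_assoc]

theorem ofReal_rpow_expo_mul_eLpNorm_dil {t : ℝ} (ht : 0 < t) {ψ : Rn n → ℝ}
    (hψ : AEStronglyMeasurable ψ volume) (q : ℝ≥0∞) :
    ENNReal.ofReal (t ^ expo n q) * eLpNorm (dil n t ψ) q volume = eLpNorm ψ q volume := by
  have hdil : dil n t ψ = t ^ (-(n : ℝ) / 2) • fun x => ψ (t ^ (-(1 : ℝ) / 2) • x) := rfl
  have hjac : |((t ^ (-(1 : ℝ) / 2)) ^ Module.finrank ℝ (Rn n))⁻¹| = t ^ ((n : ℝ) / 2) := by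
    rw [finrank_euclideanSpace_fin, ← Real.rpow_natCast, ← Real.rpow_mul ht.le,
      ← Real.rpow_neg ht.le, abs_of_pos (by positivity)]
    ring_nf
  have hexp : t ^ expo n q * (t ^ (-(n : ℝ) / 2) * (t ^ ((n : ℝ) / 2)) ^ (1 / q).toReal) = 1 := by
    rw [← Real.rpow_mul ht.le, ← Real.rpow_add ht, ← Real.rpow_add ht, expo]
    ring_nf
    exact Real.rpow_zero t
  rw [hdil, eLpNorm_const_smul, eLpNorm_comp_smul hψ (by positivity), hjac,
    Real.enorm_eq_ofReal_abs, abs_of_pos (by positivity),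
    ENNReal.ofReal_rpow_of_nonneg (by positivity) ENNReal.toReal_nonneg, ← mul_assoc, ← mul_assoc,
    ← ENNReal.ofReal_mul (by positivity), ← ENNReal.ofReal_mul (by positivity), mul_assoc, hexp,
    ENNReal.ofReal_one, one_mul]

theorem tendsto_eLpNorm_rescaledConv_gaussOne {φ : Rn n → ℝ} (hφ : Integrable φ)
    {q : ℝ≥0∞} (hq : 1 ≤ q) :
    Tendsto (fun ε => eLpNorm (rescaledConv volume (gaussOne n) ε φ) q volume) (𝓝 0)
      (𝓝 (ENNReal.ofReal |∫ y, φ y| * eLpNorm (gaussOne n) q volume)) := by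
  have hD : Integrable fun x : Rn n =>
      (4 * π) ^ (-(n : ℝ) / 2) * rexp (1 / 4) * rexp (-(1 / 8) * ‖x‖ ^ 2) :=
    (integrable_rexp_neg_mul_sq_norm (by norm_num)).const_mul _
  have hdom : ∀ᶠ h in 𝓝 (0 : Rn n), ∀ x, |gaussOne n (x - h)| ≤
      (4 * π) ^ (-(n : ℝ) / 2) * rexp (1 / 4) * rexp (-(1 / 8) * ‖x‖ ^ 2) := by
    filter_upwards [Metric.closedBall_mem_nhds (0 : Rn n) one_pos] with h hh x
    rw [abs_of_pos (gaussOne_pos _)]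
    exact gaussOne_sub_le (by simpa using hh)
  exact tendsto_eLpNorm_rescaledConv lipschitzWith_gaussOne abs_gaussOne_le hD hdom hφ hq
    (eLpNorm_gaussOne_ne_top (zero_lt_one.trans_le hq).ne')

end GaussKernel

theorem stmt17_general (n : ℕ) (φ : Rn n → ℝ)
    (hφ : MemLp φ 1 (volume : Measure (Rn n))) (q : ℝ≥0∞) (hq : 1 ≤ q) :
    Tendsto
        (fun t : ℝ => ENNReal.ofReal (t ^ expo n q) *
          eLpNorm (heatSG n t φ) q (volume : Measure (Rn n)))
        atTop
        (nhds (ENNReal.ofReal |∫ y : Rn n, φ y| *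
          eLpNorm (gaussOne n) q (volume : Measure (Rn n)))) ∧
      (q ≠ ⊤ → eLpNorm (gaussOne n) q (volume : Measure (Rn n)) =
        ENNReal.ofReal
          ((4 * π) ^ (-(expo n q)) * q.toReal ^ (-(n : ℝ) / (2 * q.toReal)))) ∧
      (q = ⊤ → eLpNorm (gaussOne n) ⊤ (volume : Measure (Rn n)) =
        ENNReal.ofReal ((4 * π) ^ (-(n : ℝ) / 2))) := by
  refine ⟨?_, eLpNorm_gaussOne (zero_lt_one.trans_le hq).ne', fun _ => eLpNorm_gaussOne_top⟩
  have hφ_int : Integrable φ := memLp_one_iff_integrable.1 hφ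
  have hε : Tendsto (fun t : ℝ => t ^ (-(1 : ℝ) / 2)) atTop (𝓝 0) := by
    simpa [neg_div] using tendsto_rpow_neg_atTop (by norm_num : (0 : ℝ) < 1 / 2)
  refine ((tendsto_eLpNorm_rescaledConv_gaussOne hφ_int hq).comp hε).congr' ?_
  filter_upwards [eventually_gt_atTop 0] with t ht
  rw [Function.comp_apply, heatSG_eq_dil_rescaledConv ht, ofReal_rpow_expo_mul_eLpNorm_dil ht
    (aestronglyMeasurable_rescaledConv lipschitzWith_gaussOne.continuous hφ_int.1 _)]

/-- Remark B.2: `lim_{t→∞} t^{(n/2)(1−1/q)} ‖e^{tΔ}φ‖_q = |c₀| ‖G₁‖_q`,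
together with the explicit value of `‖G₁‖_q`. -/
theorem stmt17 (n : ℕ) (hn : 1 ≤ n) (φ : Rn n → ℝ)
    (hφ : MemLp φ 1 (volume : Measure (Rn n))) (q : ℝ≥0∞) (hq : 1 ≤ q) :
    Tendsto
        (fun t : ℝ => ENNReal.ofReal (t ^ expo n q) *
          eLpNorm (heatSG n t φ) q (volume : Measure (Rn n)))
        atTop
        (nhds (ENNReal.ofReal |∫ y : Rn n, φ y| *
          eLpNorm (gaussOne n) q (volume : Measure (Rn n)))) ∧
      (q ≠ ⊤ → eLpNorm (gaussOne n) q (volume : Measure (Rn n)) =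
        ENNReal.ofReal
          ((4 * π) ^ (-(expo n q)) * q.toReal ^ (-(n : ℝ) / (2 * q.toReal)))) ∧
      (q = ⊤ → eLpNorm (gaussOne n) ⊤ (volume : Measure (Rn n)) =
        ENNReal.ofReal ((4 * π) ^ (-(n : ℝ) / 2))) :=
  stmt17_general n φ hφ q hq
end
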